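/- arXiv:2407.03999 — 3 statements merged into one kernel-verified Lean document; each statement's English description precedes it below -/
import Mathlib

section
/- Let M be a regular matroid realized by a totally unimodular matrix A, and let O : E → {-1,+1} be an orientation that can be transformed into an orientation O' by a finite sequence of compatible signed circuit reversals (at each step, reverse the signs of O on the support of a signed circuit compatible with the current orientation). Then O can be transformed into O' by reversing a collection of signed circuits with pairwise disjoint supports, each of which is compatible with O. -/
open scoped Classical

open Matrix

/-- The support of a vector. -/
def supp {α : Type*} (v : α → ℝ) : Set α := {x | v x ≠ 0}

/-- A vector is simple if all entries lie in `{-1,0,1}`. -/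
def Simple {α : Type*} (v : α → ℝ) : Prop := ∀ x, v x = -1 ∨ v x = 0 ∨ v x = 1

/-- A signed circuit of the regular matroid realized by `A`: a simple kernel vector
with support minimal among supports of nonzero kernel vectors. -/
def SignedCircuit {m E : Type*} [Fintype E] (A : Matrix m E ℝ) (C : E → ℝ) : Prop :=
  A.mulVec C = 0 ∧ C ≠ 0 ∧ Simple C ∧
    ∀ D : E → ℝ, A.mulVec D = 0 → D ≠ 0 → supp D ⊆ supp C → supp D = supp C

/-- A signed cocircuit: a simple row-space vector with support minimal among
supports of nonzero row-space vectors. -/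
def SignedCocircuit {m E : Type*} [Fintype m] (A : Matrix m E ℝ) (C : E → ℝ) : Prop :=
  (∃ y, Matrix.vecMul y A = C) ∧ C ≠ 0 ∧ Simple C ∧
    ∀ D : E → ℝ, (∃ y, Matrix.vecMul y A = D) → D ≠ 0 → supp D ⊆ supp C → supp D = supp C

/-! The reversals add up: since `C` is compatible with the current orientation, reversing it
subtracts `2 C`, so `O - O' = 2 (C₀ + ⋯ + C_{k-1})` and `v = (O - O') / 2` is a kernel vector with
entries in `{-1, 0, 1}`, nonzero exactly where `O` and `O'` differ, where it equals `O`.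
Such a vector decomposes conformally into signed circuits with disjoint supports: a conformal
kernel vector `D` of minimal support exists by the usual elimination argument, and total
unimodularity, through Cramer's rule, makes `D / D x₀` a `{-1, 0, 1}`-vector, i.e. a signed
circuit conformal to `v`; subtracting it and recursing on the smaller support finishes. -/

namespace Matrix

variable {m n : Type*}

lemma cramer_mulVec_self {R : Type*} [CommRing R] [Fintype n] [DecidableEq n]
    (B : Matrix n n R) (c : n → R) : cramer B (B *ᵥ c) = B.det • c := by
  rw [cramer_eq_adjugate_mulVec, mulVec_mulVec, adjugate_mul, smul_mulVec, one_mulVec]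

lemma IsTotallyUnimodular.mem_range_signType_of_mulVec_eq_col {R : Type*} [CommRing R]
    {A : Matrix m n R} (hA : A.IsTotallyUnimodular) {k : Type*} [Fintype k] [DecidableEq k]
    {r : k → m} {f : k → n} (hunit : IsUnit (A.submatrix r f).det) {c : k → R} {x : n}
    (hc : A.submatrix r f *ᵥ c = fun i => A (r i) x) (j : k) :
    c j ∈ Set.range SignType.cast := by
  set B := A.submatrix r f
  have hsign : ∀ g : k → n, (A.submatrix r g).det ∈ Set.range SignType.cast := fun g =>
    (isTotallyUnimodular_iff_fintype A).mp hA k r g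
  obtain ⟨s, hs⟩ : B.det ∈ Set.range SignType.cast := hsign f
  obtain ⟨t, ht⟩ := hsign (Function.update f j x)
  have hupdate : (B.updateCol j fun i => A (r i) x) = A.submatrix r (Function.update f j x) := by
    ext i l
    by_cases hl : l = j <;> simp [B, hl]
  have hcramer : B.det * c j = t := by
    have := congrFun (cramer_mulVec_self B c) j
    rwa [hc, cramer_apply, hupdate, ← ht, Pi.smul_apply, smul_eq_mul, eq_comm] at this
  have hss : (s : R) * s = 1 := by
    rcases s with _ | _ | _
    · rw [← hs, SignType.zero_eq_zero, SignType.coe_zero, isUnit_zero_iff] at hunit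
      rw [SignType.zero_eq_zero, SignType.coe_zero, zero_mul, hunit]
    all_goals simp
  refine ⟨s * t, ?_⟩
  rw [SignType.coe_mul, ← hcramer, ← hs, ← mul_assoc, hss, one_mul]

lemma span_row_eq_top_of_linearIndependent_col {K : Type*} [Field K] [Fintype n]
    (A : Matrix m n K) (h : LinearIndependent K A.col) :
    Submodule.span K (Set.range A.row) = ⊤ := by
  by_contra hne
  obtain ⟨f, hf0, hle⟩ := Submodule.exists_le_ker_of_lt_top _ (lt_top_iff_ne_top.mpr hne)
  set c : n → K := fun i => f fun j => if i = j then 1 else 0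
  have hf : ∀ w, f w = w ⬝ᵥ c := fun w => by
    rw [LinearMap.pi_apply_eq_sum_univ f w]
    simp [dotProduct, c]
  have hc : A *ᵥ c = A *ᵥ 0 := funext fun i => by
    rw [mulVec_zero, Pi.zero_apply, mulVec, ← hf]
    exact hle (Submodule.subset_span ⟨i, rfl⟩)
  have hc0 : c = 0 := mulVec_injective_iff.mpr h hc
  exact hf0 (LinearMap.ext fun w => by rw [hf, hc0, dotProduct_zero, LinearMap.zero_apply])

lemma exists_isUnit_submatrix_of_linearIndependent_col {K : Type*} [Field K]
    [Fintype n] [DecidableEq n] (A : Matrix m n K) (h : LinearIndependent K A.col) :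
    ∃ r : n → m, IsUnit (A.submatrix r id) := by
  obtain ⟨κ, a, -, hspan, hli⟩ := exists_linearIndependent' K A.row
  have : Fintype κ := @Fintype.ofFinite κ hli.finite
  let b := Module.Basis.mk hli (hspan.trans (A.span_row_eq_top_of_linearIndependent_col h)).ge
  have e : n ≃ κ := Fintype.equivOfCardEq (by
    rw [← Module.finrank_fintype_fun_eq_card K, Module.finrank_eq_card_basis b])
  refine ⟨a ∘ e, ?_⟩
  rw [← linearIndependent_rows_iff_isUnit]
  exact hli.comp e e.injective

lemma linearCombination_col {E : Type*} [Fintype E] (A : Matrix m E ℝ) (l : E →₀ ℝ) :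
    Finsupp.linearCombination ℝ A.col l = A *ᵥ ⇑l := by
  rw [Finsupp.linearCombination_apply, Finsupp.sum_fintype _ _ (by simp), Matrix.mulVec_eq_sum]
  simp only [op_smul_eq_smul]
  rfl

end Matrix

section

variable {m E : Type*}

lemma simple_iff_forall_mem_range_signType {v : E → ℝ} :
    Simple v ↔ ∀ x, v x ∈ Set.range SignType.cast := by
  refine forall_congr' fun x => ⟨?_, ?_⟩
  · rintro (h | h | h)
    exacts [⟨-1, by simp [h]⟩, ⟨0, by simp [h]⟩, ⟨1, by simp [h]⟩]
  · rintro ⟨s, hs⟩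
    rcases s with _ | _ | _ <;> simp [← hs]

lemma supp_sub_of_forall_eq_zero_or_eq {C v : E → ℝ}
    (h : ∀ x, C x = 0 ∨ C x = v x) : supp (v - C) = supp v \ supp C := by
  ext x
  rcases h x with hx | hx <;> simp [supp, hx]

lemma Simple.sub_of_forall_eq_zero_or_eq {C v : E → ℝ} (hv : Simple v)
    (h : ∀ x, C x = 0 ∨ C x = v x) : Simple (v - C) := fun x => by
  rcases h x with hx | hx <;> simp [hx, hv x]

lemma reverse_eq_sub {O C : E → ℝ} (h : ∀ x, C x = 0 ∨ C x = O x) :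
    (fun x => if x ∈ supp C then -(O x) else O x) = O - (2 : ℝ) • C := by
  funext x
  by_cases hx : x ∈ supp C
  · have hCx : C x = O x := (h x).resolve_left hx
    simp only [hx, if_true, Pi.sub_apply, Pi.smul_apply, smul_eq_mul, hCx]
    ring
  · simp [hx, show C x = 0 from not_not.mp hx]

def Conforms (u v : E → ℝ) : Prop := ∀ x, ∃ s : ℝ, 0 ≤ s ∧ u x = s * v x

namespace Conforms

variable {u v w : E → ℝ}

lemma refl (v : E → ℝ) : Conforms v v := fun _ => ⟨1, zero_le_one, (one_mul _).symm⟩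

lemma trans (huv : Conforms u v) (hvw : Conforms v w) : Conforms u w := fun x => by
  obtain ⟨s, hs, hsx⟩ := huv x
  obtain ⟨t, ht, htx⟩ := hvw x
  exact ⟨s * t, mul_nonneg hs ht, by rw [hsx, htx, mul_assoc]⟩

lemma smul (h : Conforms u v) {a : ℝ} (ha : 0 ≤ a) : Conforms (a • u) v := fun x => by
  obtain ⟨s, hs, hsx⟩ := h x
  exact ⟨a * s, mul_nonneg ha hs, by rw [Pi.smul_apply, smul_eq_mul, hsx, mul_assoc]⟩

lemma supp_subset (h : Conforms u v) : supp u ⊆ supp v := fun x hx hvx => by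
  obtain ⟨s, -, hsx⟩ := h x
  exact hx (by rw [hsx, hvx, mul_zero])

lemma eq_zero_or_eq (h : Conforms u v) (hu : Simple u) (hv : Simple v) (x : E) :
    u x = 0 ∨ u x = v x := by
  obtain ⟨s, hs, hsx⟩ := h x
  rcases hu x with hux | hux | hux <;> rcases hv x with hvx | hvx | hvx <;>
    rw [hux, hvx] at hsx ⊢ <;> first | (left; rfl) | (right; rfl) | (exfalso; linarith)

end Conforms

variable [Fintype E]

def HasMinimalSupport (A : Matrix m E ℝ) (D : E → ℝ) : Prop :=
  ∀ u : E → ℝ, A *ᵥ u = 0 → u ≠ 0 → supp u ⊆ supp D → supp u = supp D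

lemma exists_conforms_supp_ssubset {A : Matrix m E ℝ} {D u : E → ℝ} (hD : A *ᵥ D = 0)
    (hu : A *ᵥ u = 0) (hu0 : u ≠ 0) (hsub : supp u ⊂ supp D) :
    ∃ D', A *ᵥ D' = 0 ∧ D' ≠ 0 ∧ Conforms D' D ∧ supp D' ⊂ supp D := by
  obtain ⟨x1, hx1⟩ := Function.ne_iff.mp hu0
  have : Nonempty E := ⟨x1⟩
  -- Subtract the multiple of `u` that first kills a coordinate of `D`, maximising `|u x / D x|`
  -- over all of `E`: off `supp D` the quotient is the junk value `0`, and `u` vanishes there.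
  obtain ⟨x2, hx2⟩ := Finite.exists_max fun x => |u x / D x|
  have hDx1 : D x1 ≠ 0 := hsub.subset hx1
  have hx2pos : 0 < |u x2 / D x2| :=
    (abs_pos.mpr (div_ne_zero hx1 hDx1)).trans_le (hx2 x1)
  have hux2 : u x2 ≠ 0 := fun h => by simp [h] at hx2pos
  have hDx2 : D x2 ≠ 0 := fun h => by simp [h] at hx2pos
  set t := D x2 / u x2
  have hconf : Conforms (D - t • u) D := fun x => by
    by_cases hDx : D x = 0
    · have hux : u x = 0 := not_not.mp fun h => hsub.subset h hDx
      exact ⟨0, le_rfl, by simp [hDx, hux]⟩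
    refine ⟨1 - t * (u x / D x), ?_, ?_⟩
    · have hle : u x / D x / (u x2 / D x2) ≤ 1 :=
        (le_abs_self _).trans <| by
          rw [abs_div]; exact div_le_one_of_le₀ (hx2 x) (abs_nonneg _)
      rw [sub_nonneg, show t = (u x2 / D x2)⁻¹ from (inv_div _ _).symm, inv_mul_eq_div]
      exact hle
    · simp only [Pi.sub_apply, Pi.smul_apply, smul_eq_mul]
      field_simp
  obtain ⟨x3, hx3D, hx3u⟩ := Set.exists_of_ssubset hsub
  refine ⟨D - t • u, ?_, ?_, hconf, ?_⟩
  · rw [Matrix.mulVec_sub, Matrix.mulVec_smul, hD, hu, smul_zero, sub_zero]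
  · refine Function.ne_iff.mpr ⟨x3, ?_⟩
    simpa [supp, not_not.mp hx3u] using hx3D
  · refine (Set.ssubset_iff_of_subset hconf.supp_subset).mpr ⟨x2, hDx2, ?_⟩
    simp [supp, t, div_mul_cancel₀ _ hux2]

lemma exists_conforms_hasMinimalSupport {A : Matrix m E ℝ} {D : E → ℝ} (hD : A *ᵥ D = 0)
    (hD0 : D ≠ 0) : ∃ C, A *ᵥ C = 0 ∧ C ≠ 0 ∧ Conforms C D ∧ HasMinimalSupport A C := by
  induction hn : (supp D).ncard using Nat.strong_induction_on generalizing D with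
  | _ n ih =>
  by_cases hmin : HasMinimalSupport A D
  · exact ⟨D, hD, hD0, .refl D, hmin⟩
  obtain ⟨u, hu, hu0, hsub, hne⟩ :
      ∃ u, A *ᵥ u = 0 ∧ u ≠ 0 ∧ supp u ⊆ supp D ∧ supp u ≠ supp D := by
    simpa [HasMinimalSupport] using hmin
  obtain ⟨D', hD', hD'0, hconf, hlt⟩ :=
    exists_conforms_supp_ssubset hD hu hu0 (hsub.ssubset_of_ne hne)
  obtain ⟨C, hC, hC0, hCconf, hCmin⟩ :=
    ih _ (hn ▸ Set.ncard_lt_ncard hlt) hD' hD'0 rfl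
  exact ⟨C, hC, hC0, hCconf.trans hconf, hCmin⟩

namespace HasMinimalSupport

variable {A : Matrix m E ℝ} {D : E → ℝ}

lemma linearIndepOn_col (hmin : HasMinimalSupport A D) {x0 : E} (hx0 : D x0 ≠ 0) :
    LinearIndepOn ℝ A.col (supp D \ {x0}) := by
  rw [linearIndepOn_iff]
  intro l hl hcomb
  rw [Matrix.linearCombination_col] at hcomb
  have hsub : supp l ⊆ supp D \ {x0} := fun x hx => hl (Finsupp.mem_support_iff.mpr hx)
  by_contra hl0
  have hsupp : supp l = supp D :=
    hmin l hcomb (by simpa using hl0) (hsub.trans Set.sdiff_subset)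
  exact (hsub (hsupp ▸ hx0 : x0 ∈ supp l)).2 rfl

lemma div_mem_range_signType (hA : A.IsTotallyUnimodular) (hD : A *ᵥ D = 0)
    (hmin : HasMinimalSupport A D) {x0 : E} (hx0 : D x0 ≠ 0) (x : E) :
    D x / D x0 ∈ Set.range SignType.cast := by
  set T : Finset E := ({y | D y ≠ 0} : Finset E).erase x0
  by_cases hx : x ∈ T
  swap
  · by_cases hxx0 : x = x0
    · exact ⟨1, by simp [hxx0, hx0]⟩
    · exact ⟨0, by simp_all [T]⟩
  have hT : (T : Set E) = supp D \ {x0} := by ext; simp [T, supp, and_comm]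
  have hli : LinearIndependent ℝ (A.submatrix id ((↑) : T → E)).col := by
    have := hmin.linearIndepOn_col hx0
    rw [← hT] at this
    exact this
  obtain ⟨r, hr⟩ :=
    (A.submatrix id ((↑) : T → E)).exists_isUnit_submatrix_of_linearIndependent_col hli
  have hrow : ∀ i, ∑ y ∈ T, A i y * D y = -(A i x0 * D x0) := fun i => by
    have hx0T : x0 ∈ ({y | D y ≠ 0} : Finset E) := by simpa using hx0
    rw [eq_neg_iff_add_eq_zero, Finset.sum_erase_add _ _ hx0T, Finset.sum_filter_of_ne]
    · exact congrFun hD i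
    · exact fun y _ h => right_ne_zero_of_mul h
  have hc : A.submatrix r (↑) *ᵥ (fun y : T => -(D y / D x0)) = fun i => A (r i) x0 := by
    funext i
    simp only [Matrix.mulVec, dotProduct, Matrix.submatrix_apply]
    rw [Finset.sum_coe_sort T fun y => A (r i) y * -(D y / D x0)]
    simp only [mul_neg, ← mul_div_assoc, Finset.sum_neg_distrib, ← Finset.sum_div, hrow]
    field_simp
  obtain ⟨s, hs⟩ := hA.mem_range_signType_of_mulVec_eq_col
    ((Matrix.isUnit_iff_isUnit_det _).mp hr) hc ⟨x, hx⟩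
  exact ⟨-s, by simp [hs]⟩

end HasMinimalSupport

lemma exists_signedCircuit_conforms {A : Matrix m E ℝ}
    (hA : A.IsTotallyUnimodular) {v : E → ℝ} (hv : A *ᵥ v = 0) (hvs : Simple v) (hv0 : v ≠ 0) :
    ∃ C, SignedCircuit A C ∧ ∀ x, C x = 0 ∨ C x = v x := by
  obtain ⟨D, hD, hD0, hconf, hmin⟩ := exists_conforms_hasMinimalSupport hv hv0
  obtain ⟨x0, hx0⟩ : ∃ x, D x ≠ 0 := Function.ne_iff.mp hD0
  obtain ⟨s0, hs0, hDx0⟩ := hconf x0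
  have hvx0 : v x0 ≠ 0 := fun h => hx0 (by rw [hDx0, h, mul_zero])
  have hscale0 : v x0 / D x0 ≠ 0 := div_ne_zero hvx0 hx0
  have hscale : 0 ≤ v x0 / D x0 := by
    rw [hDx0, div_mul_cancel_right₀ hvx0]; exact inv_nonneg.mpr hs0
  set C := (v x0 / D x0) • D
  have hCs : Simple C := simple_iff_forall_mem_range_signType.mpr fun x => by
    obtain ⟨a, ha⟩ := simple_iff_forall_mem_range_signType.mp hvs x0
    obtain ⟨b, hb⟩ := hmin.div_mem_range_signType hA hD hx0 x
    refine ⟨a * b, ?_⟩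
    rw [SignType.coe_mul, ha, hb]
    simp only [C, Pi.smul_apply, smul_eq_mul]
    ring
  have hsupp : supp C = supp D := Function.support_const_smul_of_ne_zero _ _ hscale0
  refine ⟨C, ⟨?_, smul_ne_zero hscale0 hD0, hCs, ?_⟩, (hconf.smul hscale).eq_zero_or_eq hCs hvs⟩
  · rw [Matrix.mulVec_smul, hD, smul_zero]
  · intro u hu hu0 hsub
    rw [hsupp] at hsub ⊢
    exact hmin u hu hu0 hsub

theorem exists_disjoint_signedCircuits_of_simple {A : Matrix m E ℝ}
    (hA : A.IsTotallyUnimodular) {v : E → ℝ} (hv : A *ᵥ v = 0) (hvs : Simple v) :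
    ∃ (n : ℕ) (c : Fin n → E → ℝ), (∀ i, SignedCircuit A (c i)) ∧
      (Pairwise fun i j => supp (c i) ∩ supp (c j) = ∅) ∧
      (∀ i x, c i x = 0 ∨ c i x = v x) ∧ ⋃ i, supp (c i) = supp v := by
  induction hN : (supp v).ncard using Nat.strong_induction_on generalizing v with
  | _ N ih =>
  by_cases hv0 : v = 0
  · subst hv0
    exact ⟨0, Fin.elim0, fun i => i.elim0, fun i => i.elim0, fun i => i.elim0, by simp [supp]⟩
  obtain ⟨C, hC, hCv⟩ := exists_signedCircuit_conforms hA hv hvs hv0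
  have hsupp := supp_sub_of_forall_eq_zero_or_eq hCv
  have hCsub : supp C ⊆ supp v := fun x hx => by
    rcases hCv x with h | h
    exacts [absurd h hx, by simpa [supp, h] using hx]
  have hlt : (supp (v - C)).ncard < N := by
    rw [← hN, hsupp]
    refine Set.ncard_lt_ncard (hCsub.sdiff_ssubset_of_nonempty ?_)
    exact Function.support_nonempty_iff.mpr hC.2.1
  obtain ⟨n, c, hc, hdisj, hcv, hunion⟩ := ih _ hlt
    (by rw [Matrix.mulVec_sub, hv, hC.1, sub_zero]) (hvs.sub_of_forall_eq_zero_or_eq hCv) rfl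
  have hCc : ∀ i, supp C ∩ supp (c i) = ∅ := fun i => by
    have := (Set.subset_iUnion _ i).trans hunion.le
    rw [hsupp] at this
    exact Set.disjoint_iff_inter_eq_empty.mp (Set.disjoint_sdiff_right.mono_right this)
  refine ⟨n + 1, Fin.cons C c, ?_, ?_, ?_, ?_⟩
  · exact Fin.cases hC hc
  · intro i j hij
    cases i using Fin.cases <;> cases j using Fin.cases
    · exact absurd rfl hij
    · simpa using hCc _
    · simpa [Set.inter_comm] using hCc _
    · simpa using hdisj fun h => hij (congrArg Fin.succ h)
  · intro i x
    cases i using Fin.cases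
    · simpa using hCv x
    · rcases hcv _ x with h | h
      · simpa using Or.inl h
      · rcases hCv x with h' | h' <;> simp [h, h']
  · ext x
    simp only [Set.mem_iUnion, Fin.exists_fin_succ, Fin.cons_zero, Fin.cons_succ]
    rw [← Set.mem_iUnion, hunion, hsupp, ← Set.mem_union, Set.union_sdiff_cancel hCsub]

lemma reversal_sequence_invariant {A : Matrix m E ℝ} {k : ℕ} {Os Cs : ℕ → E → ℝ}
    (hsign : ∀ x, Os 0 x = 1 ∨ Os 0 x = -1) (hker : ∀ i < k, A *ᵥ Cs i = 0)
    (hcompat : ∀ i < k, ∀ x, Cs i x = 0 ∨ Cs i x = Os i x)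
    (hrev : ∀ i < k, Os (i + 1) = fun x => if x ∈ supp (Cs i) then -(Os i x) else Os i x) :
    ∀ j ≤ k, (∀ x, Os j x = 1 ∨ Os j x = -1) ∧ A *ᵥ Os j = A *ᵥ Os 0 := by
  intro j
  induction j with
  | zero => exact fun _ => ⟨hsign, rfl⟩
  | succ j ih =>
    intro hj
    obtain ⟨hsignj, hAj⟩ := ih (by omega)
    refine ⟨fun x => ?_, ?_⟩
    · rw [hrev j hj]
      beta_reduce
      split_ifs <;> rcases hsignj x with h | h <;> simp [h]
    · rw [hrev j hj, reverse_eq_sub (hcompat j hj), Matrix.mulVec_sub, Matrix.mulVec_smul,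
        hker j hj, smul_zero, sub_zero, hAj]

end

theorem circuit_reversal_sequence_reduces_to_disjoint_reversals_general
    {m E : Type*} [Fintype E] (A : Matrix m E ℝ)
    (hA : A.IsTotallyUnimodular) (O O' : E → ℝ)
    (hO : ∀ x, O x = 1 ∨ O x = -1)
    (k : ℕ) (Os : ℕ → (E → ℝ)) (Cs : ℕ → (E → ℝ))
    (h0 : Os 0 = O) (hk : Os k = O')
    (hstep : ∀ i < k, SignedCircuit A (Cs i) ∧
      (∀ x, Cs i x = 0 ∨ Cs i x = Os i x) ∧
      Os (i + 1) = fun x => if x ∈ supp (Cs i) then -(Os i x) else Os i x) :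
    ∃ (n : ℕ) (c : Fin n → (E → ℝ)),
      (∀ i, SignedCircuit A (c i)) ∧
      (Pairwise fun i j => supp (c i) ∩ supp (c j) = ∅) ∧
      (∀ i, ∀ x, c i x = 0 ∨ c i x = O x) ∧
      O' = fun x => if x ∈ ⋃ i, supp (c i) then -(O x) else O x := by
  obtain ⟨hO', hAO'⟩ := reversal_sequence_invariant (h0 ▸ hO) (fun i hi => (hstep i hi).1.1)
    (fun i hi => (hstep i hi).2.1) (fun i hi => (hstep i hi).2.2) k le_rfl
  rw [hk] at hO' hAO'
  rw [h0] at hAO'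
  set v : E → ℝ := (1 / 2 : ℝ) • (O - O')
  have hv : ∀ x, v x = 0 ∧ O' x = O x ∨ v x = O x ∧ O' x = -O x := fun x => by
    rcases hO x with h | h <;> rcases hO' x with h' | h' <;> norm_num [v, h, h']
  have hker : A *ᵥ v = 0 := by rw [Matrix.mulVec_smul, Matrix.mulVec_sub, hAO', sub_self, smul_zero]
  have hsimple : Simple v := fun x => by
    rcases hO x with h | h <;> rcases hv x with ⟨hvx, -⟩ | ⟨hvx, -⟩ <;> simp [hvx, h]
  obtain ⟨n, c, hc, hdisj, hcv, hunion⟩ := exists_disjoint_signedCircuits_of_simple hA hker hsimple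
  refine ⟨n, c, hc, hdisj, fun i x => ?_, ?_⟩
  · rcases hv x with ⟨h, -⟩ | ⟨h, -⟩ <;> rcases hcv i x with h' | h' <;> simp [h, h']
  · funext x
    rw [hunion]
    rcases hv x with ⟨h, h'⟩ | ⟨h, h'⟩
    · simp [supp, h, h']
    · have hOx : O x ≠ 0 := by rcases hO x with h | h <;> simp [h]
      simp [supp, h, h', hOx]

theorem circuit_reversal_sequence_reduces_to_disjoint_reversals
    {m E : Type*} [Fintype m] [Fintype E] (A : Matrix m E ℝ)
    (hA : A.IsTotallyUnimodular) (O O' : E → ℝ)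
    (hO : ∀ x, O x = 1 ∨ O x = -1)
    (k : ℕ) (Os : ℕ → (E → ℝ)) (Cs : ℕ → (E → ℝ))
    (h0 : Os 0 = O) (hk : Os k = O')
    (hstep : ∀ i < k, SignedCircuit A (Cs i) ∧
      (∀ x, Cs i x = 0 ∨ Cs i x = Os i x) ∧
      Os (i + 1) = fun x => if x ∈ supp (Cs i) then -(Os i x) else Os i x) :
    ∃ (n : ℕ) (c : Fin n → (E → ℝ)),
      (∀ i, SignedCircuit A (c i)) ∧
      (Pairwise fun i j => supp (c i) ∩ supp (c j) = ∅) ∧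
      (∀ i, ∀ x, c i x = 0 ∨ c i x = O x) ∧
      O' = fun x => if x ∈ ⋃ i, supp (c i) then -(O x) else O x :=
  circuit_reversal_sequence_reduces_to_disjoint_reversals_general A hA O O' hO k Os Cs h0 hk hstep
end

section
/- Let A be a totally unimodular matrix with columns indexed by E realizing a regular matroid M, and let P be a vector in the row space of A with all entries in {-1,0,1}. Then P can be written as a sum of signed cocircuits of M with pairwise disjoint supports, each agreeing in sign with P on its support. -/
open Matrix

/-!
Among the nonzero row-space vectors conforming to `P` (nonzero only where `P` is, and of the same
sign there), one of smallest support has minimal support among all nonzero row-space vectors: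
otherwise subtracting a suitable multiple of a row-space vector of smaller support would kill a
coordinate and keep all signs.

For totally unimodular `A`, a row-space vector of minimal support that is `±1` at a coordinate
`x₀` is a `{-1, 0, 1}`-vector. Take the column `x₀` together with a basis `β` of the columns on
which the vector vanishes, and rows `ρ` making the square submatrix `N = A[ρ, x₀ :: β]`
nonsingular. Row `x₀` of `N⁻¹` times the rows `ρ` of `A` is a row-space vector that is `1` at
`x₀` and vanishes on those columns, hence equals the given vector up to sign; by Cramer's rule its
entries are quotients of two subdeterminants of `A`.

Such a cocircuit conforming to the simple vector `P` agrees with `P` on its support, so `P` minus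
it is again simple and of smaller support, and we induct. Pieces that agree with `P` on their
supports and sum to `P` have disjoint supports.
-/

theorem mem_supp {α : Type*} {v : α → ℝ} {x : α} : x ∈ supp v ↔ v x ≠ 0 := Iff.rfl

theorem supp_smul {α : Type*} {c : ℝ} (hc : c ≠ 0) (v : α → ℝ) : supp (c • v) = supp v := by
  ext x; simp [mem_supp, hc]

theorem Simple.smul {E : Type*} {v : E → ℝ} (hv : Simple v) {c : ℝ} (hc : |c| = 1) :
    Simple (c • v) := by
  rcases (abs_eq zero_le_one).mp hc with rfl | rfl <;> intro x <;> rcases hv x with h | h | h <;>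
    simp [h]

theorem sub_mul_pos_of_abs_le {a b : ℝ} (h : |b| ≤ |a|) (hab : a - b ≠ 0) : 0 < (a - b) * a := by
  have ha : a ≠ 0 := by rintro rfl; simp_all
  have : 0 ≤ (a - b) * a := by
    nlinarith [le_abs_self (b * a), abs_mul b a, abs_mul_abs_self a,
      mul_le_mul_of_nonneg_right h (abs_nonneg a)]
  exact this.lt_of_ne (mul_ne_zero hab ha).symm

section ConformalElementary

variable {E : Type*}

def ConformsTo (u v : E → ℝ) : Prop := ∀ x, u x ≠ 0 → 0 < u x * v x

theorem ConformsTo.refl (v : E → ℝ) : ConformsTo v v := fun _ hx => mul_self_pos.mpr hx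

theorem ConformsTo.trans {u v w : E → ℝ} (huv : ConformsTo u v) (hvw : ConformsTo v w) :
    ConformsTo u w := fun x hx => by
  have h₁ := huv x hx
  have h₂ := hvw x (right_ne_zero_of_mul h₁.ne')
  nlinarith [mul_pos h₁ h₂, sq_nonneg (v x)]

theorem ConformsTo.smul {u v : E → ℝ} (h : ConformsTo u v) {c : ℝ} (hc : 0 < c) :
    ConformsTo (c • u) v := fun x hx => by
  rw [Pi.smul_apply, smul_eq_mul, mul_assoc]
  exact mul_pos hc (h x (right_ne_zero_of_mul hx))

theorem Simple.eq_of_conformsTo {u v : E → ℝ} (hu : Simple u) (hv : Simple v)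
    (h : ConformsTo u v) {x : E} (hx : u x ≠ 0) : u x = v x := by
  have := h x hx
  rcases hu x with h₁ | h₁ | h₁ <;> rcases hv x with h₂ | h₂ | h₂ <;> simp_all <;> linarith

/-- An elementary vector of `V` in Rockafellar's sense. -/
def IsElementary (V : Submodule ℝ (E → ℝ)) (w : E → ℝ) : Prop :=
  w ∈ V ∧ w ≠ 0 ∧ ∀ D ∈ V, D ≠ 0 → supp D ⊆ supp w → supp D = supp w

variable {V : Submodule ℝ (E → ℝ)} {w : E → ℝ}

theorem IsElementary.smul (hw : IsElementary V w) {c : ℝ} (hc : c ≠ 0) :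
    IsElementary V (c • w) := by
  obtain ⟨hwV, hw0, hmin⟩ := hw
  refine ⟨V.smul_mem c hwV, smul_ne_zero hc hw0, fun D hD hD0 hsub => ?_⟩
  rw [supp_smul hc] at hsub ⊢
  exact hmin D hD hD0 hsub

theorem IsElementary.eq_smul_of_supp_subset (hw : IsElementary V w) {v : E → ℝ} (hv : v ∈ V)
    (hsub : supp v ⊆ supp w) {x : E} (hx : w x ≠ 0) : v = (v x / w x) • w := by
  set u := v - (v x / w x) • w
  have hux : u x = 0 := by simp [u, hx]
  have husub : supp u ⊆ supp w := fun y hy => by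
    by_contra hwy
    have hvy : v y = 0 := not_not.mp fun h => hwy (hsub h)
    exact hy (by simp [u, hvy, not_not.mp hwy])
  by_contra hne
  have hu0 : u ≠ 0 := sub_ne_zero.mpr hne
  have := hw.2.2 u (V.sub_mem hv (V.smul_mem _ hw.1)) hu0 husub
  exact (this ▸ hx : x ∈ supp u) hux

theorem exists_conformsTo_of_supp_ssubset [Finite E] {C D : E → ℝ} (hC : C ∈ V) (hD : D ∈ V)
    (hD0 : D ≠ 0) (hsub : supp D ⊂ supp C) :
    ∃ C' ∈ V, C' ≠ 0 ∧ ConformsTo C' C ∧ supp C' ⊂ supp C := by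
  obtain ⟨xs, hxs, hmin⟩ := (supp D).exists_min_image (fun x => |C x| / |D x|) (Set.toFinite _)
    (Function.ne_iff.mp hD0)
  obtain ⟨x₁, hx₁C, hx₁D⟩ := Set.exists_of_ssubset hsub
  -- the largest multiple of `D` that can be taken off `C` without changing a sign; it zeroes `xs`
  set t := C xs / D xs
  have hle : ∀ x ∈ supp D, |t * D x| ≤ |C x| := fun x hx => by
    rw [abs_mul, abs_div, ← le_div_iff₀ (abs_pos.mpr hx)]
    exact hmin x hx
  have hvanish : ∀ x, C x = 0 → D x = 0 := fun x hx => not_not.mp fun h => hsub.1 h hx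
  have hC'sub : supp (C - t • D) ⊆ supp C := fun x hx hCx => hx (by simp [hCx, hvanish x hCx])
  refine ⟨C - t • D, V.sub_mem hC (V.smul_mem t hD), fun h => hx₁C ?_, fun x hx => ?_,
    hC'sub.ssubset_of_not_subset fun h => h (hsub.1 hxs) ?_⟩
  · simpa [not_not.mp hx₁D] using congrFun h x₁
  · by_cases hDx : D x = 0
    · simp only [Pi.sub_apply, Pi.smul_apply, smul_eq_mul, hDx, mul_zero, sub_zero] at hx ⊢
      exact mul_self_pos.mpr hx
    · exact sub_mul_pos_of_abs_le (hle x hDx) hx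
  · simp [t, div_mul_cancel₀ _ (mem_supp.mp hxs)]

theorem exists_isElementary_conformsTo [Finite E] {P : E → ℝ} (hP : P ∈ V) (hP0 : P ≠ 0) :
    ∃ C, IsElementary V C ∧ ConformsTo C P := by
  obtain ⟨C, ⟨hC, hC0, hCP⟩, hmin⟩ := exists_minimalFor_of_wellFoundedLT
    (fun C => C ∈ V ∧ C ≠ 0 ∧ ConformsTo C P) (fun C => (supp C).ncard)
    ⟨P, hP, hP0, .refl P⟩
  refine ⟨C, ⟨hC, hC0, fun D hD hD0 hsub => ?_⟩, hCP⟩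
  by_contra hne
  obtain ⟨C', hC', hC'0, hC'C, hssub⟩ :=
    exists_conformsTo_of_supp_ssubset hC hD hD0 (hsub.ssubset_of_ne hne)
  have hlt := Set.ncard_lt_ncard hssub (Set.toFinite _)
  exact hlt.not_ge (hmin ⟨hC', hC'0, hC'C.trans hCP⟩ hlt.le)

end ConformalElementary

namespace Matrix

theorem exists_isUnit_submatrix_of_linearIndependent_cols {m ι K : Type*} [Fintype m]
    [Fintype ι] [DecidableEq ι] [Field K] (M : Matrix m ι K) (hM : LinearIndependent K M.col) :
    ∃ ρ : ι → m, IsUnit (M.submatrix ρ id) := by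
  have hrows : Submodule.span K (Set.range M.row) = ⊤ := by
    apply Submodule.eq_top_of_finrank_eq
    rw [← rank_eq_finrank_span_row, rank_eq_finrank_span_cols, finrank_span_eq_card hM,
      Module.finrank_fintype_fun_eq_card]
  obtain ⟨κ, a, -, hspan, hli⟩ := exists_linearIndependent' K M.row
  let b : Module.Basis κ K (ι → K) := .mk hli (by rw [hspan, hrows])
  let e : ι ≃ κ := (Pi.basisFun K ι).indexEquiv b
  refine ⟨a ∘ e, linearIndependent_rows_iff_isUnit.mp ?_⟩
  exact hli.comp e e.injective

theorem IsTotallyUnimodular.simple_inv_submatrix_mulVec {m E ι : Type*} [Fintype ι]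
    [DecidableEq ι] {A : Matrix m E ℝ} (hA : A.IsTotallyUnimodular) (ρ : ι → m) (β : ι → E)
    (hN : IsUnit (A.submatrix ρ β)) (j : ι) :
    Simple fun e => ((A.submatrix ρ β)⁻¹ *ᵥ fun k => A (ρ k) e) j := by
  intro e
  have hupdate : (A.submatrix ρ β).updateCol j (fun k => A (ρ k) e) =
      A.submatrix ρ (Function.update β j e) := by
    ext k l
    by_cases hl : l = j <;> simp [hl]
  have hN' := (isUnit_iff_isUnit_det _).mp hN
  have cramer := congrFun ((A.submatrix ρ β).det_smul_inv_mulVec_eq_cramer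
    (fun k => A (ρ k) e) hN') j
  rw [Pi.smul_apply, cramer_apply, hupdate, smul_eq_mul] at cramer
  obtain ⟨s, hs⟩ := (isTotallyUnimodular_iff_fintype A).mp hA ι ρ β
  obtain ⟨s', hs'⟩ := (isTotallyUnimodular_iff_fintype A).mp hA ι ρ (Function.update β j e)
  rw [← hs, ← hs'] at cramer
  rw [← hs] at hN'
  rcases s with _ | _ | _ <;> rcases s' with _ | _ | _ <;> simp at hN' cramer ⊢ <;> grind

variable {m E R : Type*} [Fintype m] [CommSemiring R]

def rowSpace (A : Matrix m E R) : Submodule R (E → R) :=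
  LinearMap.range A.vecMulLinear

theorem mem_rowSpace_iff {A : Matrix m E R} {u : E → R} :
    u ∈ A.rowSpace ↔ ∃ y, y ᵥ* A = u := Iff.rfl

theorem rowSpace_submatrix_le {m' : Type*} [Fintype m'] (A : Matrix m E R) (ρ : m' → m) :
    (A.submatrix ρ id).rowSpace ≤ A.rowSpace := by
  rw [rowSpace, rowSpace, range_vecMulLinear, range_vecMulLinear]
  exact Submodule.span_mono (Set.range_comp_subset_range ρ A.row)

theorem apply_eq_zero_of_col_mem_span {A : Matrix m E R} {u : E → R} (hu : u ∈ A.rowSpace)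
    {S : Set E} (hS : ∀ e ∈ S, u e = 0) {e : E}
    (he : A.col e ∈ Submodule.span R (A.col '' S)) : u e = 0 := by
  obtain ⟨y, rfl⟩ := hu
  have hker : Submodule.span R (A.col '' S) ≤ LinearMap.ker (dotProductBilin R R y) :=
    Submodule.span_le.mpr (by rintro _ ⟨s, hs, rfl⟩; exact hS s hs)
  exact hker he

theorem IsTotallyUnimodular.exists_simple_mem_rowSpace_of_col_notMem_span [Fintype E]
    {A : Matrix m E ℝ} (hA : A.IsTotallyUnimodular) {Z : Set E} {x₀ : E}
    (hx₀ : A.col x₀ ∉ Submodule.span ℝ (A.col '' Z)) :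
    ∃ v ∈ A.rowSpace, Simple v ∧ v x₀ = 1 ∧ ∀ e ∈ Z, v e = 0 := by
  classical
  obtain ⟨κ, a, ha, hspan, hli⟩ := exists_linearIndependent' ℝ fun e : Z => A.col e
  have : Finite κ := Finite.of_injective a ha
  have := Fintype.ofFinite κ
  let β : Option κ → E := fun o => Option.casesOn' o x₀ fun k => a k
  have hspan' :
      Submodule.span ℝ (A.col '' Z) = Submodule.span ℝ (A.col '' Set.range (β ∘ some)) := by
    rw [Set.image_eq_range, ← hspan, ← Set.range_comp]; rfl
  have hβ : LinearIndependent ℝ (A.submatrix id β).col := by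
    have hcol : (A.submatrix id β).col =
        fun o => o.casesOn' (A.col x₀) ((fun e : Z => A.col e) ∘ a) := by
      funext o; cases o <;> rfl
    rw [hcol]
    exact hli.option (by rwa [hspan, ← Set.image_eq_range])
  obtain ⟨ρ, hρ⟩ := exists_isUnit_submatrix_of_linearIndependent_cols _ hβ
  rw [submatrix_submatrix] at hρ
  set N := A.submatrix ρ β
  let v : E → ℝ := N⁻¹ none ᵥ* A.submatrix ρ id
  have hvβ : ∀ o, v (β o) = (1 : Matrix (Option κ) (Option κ) ℝ) none o := fun o => by
    rw [← nonsing_inv_mul N ((isUnit_iff_isUnit_det N).mp hρ)]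
    rfl
  have hv : v ∈ A.rowSpace := rowSpace_submatrix_le A ρ ⟨_, rfl⟩
  refine ⟨v, hv, hA.simple_inv_submatrix_mulVec ρ β hρ none, (hvβ none).trans (one_apply_eq none),
    fun e he => apply_eq_zero_of_col_mem_span hv (S := Set.range (β ∘ some)) ?_
      (hspan' ▸ Submodule.subset_span (Set.mem_image_of_mem _ he))⟩
  rintro _ ⟨k, rfl⟩
  simpa using hvβ (some k)

end Matrix

theorem signedCocircuit_iff {m E : Type*} [Fintype m] (A : Matrix m E ℝ) (C : E → ℝ) :
    SignedCocircuit A C ↔ IsElementary A.rowSpace C ∧ Simple C :=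
  ⟨fun ⟨hC, hC0, hs, hmin⟩ => ⟨⟨hC, hC0, hmin⟩, hs⟩,
    fun ⟨⟨hC, hC0, hmin⟩, hs⟩ => ⟨hC, hC0, hs, hmin⟩⟩

theorem pairwise_supp_inter_eq_empty_of_sum_eq {ι E : Type*} [Fintype ι] {P : E → ℝ}
    {c : ι → E → ℝ} (hc : ∀ i x, c i x ≠ 0 → c i x = P x) (hsum : P = ∑ i, c i) :
    Pairwise fun i j => supp (c i) ∩ supp (c j) = ∅ := by
  classical
  intro i j hij
  refine Set.eq_empty_of_forall_notMem fun x ⟨(hi : c i x ≠ 0), (hj : c j x ≠ 0)⟩ => ?_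
  have hnonneg : ∀ k, 0 ≤ c k x * P x := fun k => by
    by_cases h : c k x = 0
    · simp [h]
    · rw [hc k x h]; exact mul_self_nonneg _
  have hle : c i x * P x + c j x * P x ≤ ∑ k, c k x * P x := by
    rw [← Finset.sum_pair (f := fun k => c k x * P x) hij]
    exact Finset.sum_le_sum_of_subset_of_nonneg (Finset.subset_univ _) fun k _ _ => hnonneg k
  rw [← Finset.sum_mul, ← Finset.sum_apply, ← hsum, hc i x hi, hc j x hj] at hle
  nlinarith [mul_self_pos.mpr (hc i x hi ▸ hi : P x ≠ 0)]

namespace Matrix.IsTotallyUnimodular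

variable {m E : Type*} [Fintype m] [Fintype E] {A : Matrix m E ℝ}

theorem simple_of_isElementary (hA : A.IsTotallyUnimodular) {w : E → ℝ}
    (hw : IsElementary A.rowSpace w) {x₀ : E} (hx₀ : |w x₀| = 1) : Simple w := by
  have hwx₀ : w x₀ ≠ 0 := abs_ne_zero.mp (hx₀ ▸ one_ne_zero)
  have hcol : A.col x₀ ∉ Submodule.span ℝ (A.col '' {e | w e = 0}) := fun h =>
    hwx₀ (apply_eq_zero_of_col_mem_span hw.1 (fun _ he => he) h)
  obtain ⟨v, hv, hvs, hvx₀, hvZ⟩ := hA.exists_simple_mem_rowSpace_of_col_notMem_span hcol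
  have hvw : v = (v x₀ / w x₀) • w :=
    hw.eq_smul_of_supp_subset hv (fun e he hwe => he (hvZ e hwe)) hwx₀
  have hwv : w = w x₀ • v := by rw [hvw, hvx₀, smul_smul, mul_one_div_cancel hwx₀, one_smul]
  exact hwv ▸ hvs.smul hx₀

theorem exists_signedCocircuit_conformsTo (hA : A.IsTotallyUnimodular) {P : E → ℝ}
    (hP : P ∈ A.rowSpace) (hP0 : P ≠ 0) : ∃ C, SignedCocircuit A C ∧ ConformsTo C P := by
  obtain ⟨C₀, hC₀, hC₀P⟩ := exists_isElementary_conformsTo hP hP0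
  obtain ⟨x₀, hx₀⟩ : ∃ x, C₀ x ≠ 0 := Function.ne_iff.mp hC₀.2.1
  have hc : 0 < |C₀ x₀|⁻¹ := inv_pos.mpr (abs_pos.mpr hx₀)
  have hC := hC₀.smul hc.ne'
  have hCs := hA.simple_of_isElementary hC (x₀ := x₀) (by simp [abs_inv, hx₀])
  exact ⟨_, (signedCocircuit_iff A _).mpr ⟨hC, hCs⟩, hC₀P.smul hc⟩

theorem exists_signedCocircuit_decomposition (hA : A.IsTotallyUnimodular) {P : E → ℝ}
    (hP : P ∈ A.rowSpace) (hPs : Simple P) :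
    ∃ (n : ℕ) (c : Fin n → E → ℝ), (∀ i, SignedCocircuit A (c i)) ∧
      (∀ i x, c i x ≠ 0 → c i x = P x) ∧ P = ∑ i, c i := by
  induction hk : (supp P).ncard using Nat.strong_induction_on generalizing P with
  | _ k ih =>
  by_cases hP0 : P = 0
  · exact ⟨0, Fin.elim0, fun i => i.elim0, fun i => i.elim0, by simp [hP0]⟩
  obtain ⟨C, hC, hCP⟩ := hA.exists_signedCocircuit_conformsTo hP hP0
  have hCeq : ∀ x, C x ≠ 0 → C x = P x := fun x hx => hC.2.2.1.eq_of_conformsTo hPs hCP hx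
  have hrest : ∀ x, (P - C) x ≠ 0 → C x = 0 := fun x hx =>
    by_contra fun hCx => hx (by rw [Pi.sub_apply, hCeq x hCx, sub_self])
  have hrest_eq : ∀ x, (P - C) x ≠ 0 → (P - C) x = P x := fun x hx => by
    rw [Pi.sub_apply, hrest x hx, sub_zero]
  have hsimple : Simple (P - C) := fun x => by
    by_cases hx : (P - C) x = 0
    · exact .inr (.inl hx)
    · exact hrest_eq x hx ▸ hPs x
  obtain ⟨x₀, hx₀⟩ : ∃ x, C x ≠ 0 := Function.ne_iff.mp hC.2.1
  have hx₀P : x₀ ∈ supp P := by rw [mem_supp, ← hCeq x₀ hx₀]; exact hx₀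
  have hssub : supp (P - C) ⊂ supp P :=
    ⟨fun x hx => by rw [mem_supp, ← hrest_eq x hx]; exact hx, fun h => hx₀ (hrest x₀ (h hx₀P))⟩
  obtain ⟨n, c, hc, hcP, hsum⟩ := ih _ (hk ▸ Set.ncard_lt_ncard hssub (Set.toFinite _))
    (A.rowSpace.sub_mem hP (mem_rowSpace_iff.mpr hC.1)) hsimple rfl
  have hsum' : P = ∑ i, (Fin.cons C c : Fin (n + 1) → E → ℝ) i := by
    simp only [Fin.sum_univ_succ, Fin.cons_zero, Fin.cons_succ, ← hsum, add_sub_cancel]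
  refine ⟨n + 1, Fin.cons C c, Fin.cases hC hc, Fin.cases hCeq fun i x hx => ?_, hsum'⟩
  rw [Fin.cons_succ] at hx ⊢
  rw [hcP i x hx, hrest_eq x (hcP i x hx ▸ hx)]

end Matrix.IsTotallyUnimodular

theorem simple_rowspace_vector_decomposes_into_disjoint_conformal_cocircuits
    {m E : Type*} [Fintype m] [Fintype E] (A : Matrix m E ℝ)
    (hA : A.IsTotallyUnimodular) (P : E → ℝ) (hP : ∃ y, Matrix.vecMul y A = P)
    (hPs : Simple P) :
    ∃ (n : ℕ) (c : Fin n → (E → ℝ)),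
      (∀ i, SignedCocircuit A (c i)) ∧
      (Pairwise fun i j => supp (c i) ∩ supp (c j) = ∅) ∧
      (∀ i, ∀ x ∈ supp (c i), c i x = P x) ∧
      P = ∑ i, c i := by
  obtain ⟨n, c, hc, hcP, hsum⟩ :=
    hA.exists_signedCocircuit_decomposition (mem_rowSpace_iff.mpr hP) hPs
  exact ⟨n, c, hc, pairwise_supp_inter_eq_empty_of_sum_eq hcP hsum, hcP, hsum⟩
end

section
/- Let M be a regular matroid and e a non-loop, non-coloop element. If B is a basis of M containing e, then for every f ∉ B, the restriction to E∖{e} of the signed fundamental circuit of f with respect to B is a signed fundamental circuit of f with respect to the basis B∖e of M/e, and this correspondence is a bijection between signed fundamental circuits of B in M and those of B∖e in M/e. -/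
open Matrix

open scoped Classical

/-- Restriction of a vector to the coordinates other than `e`. -/
def restr {E : Type*} (e : E) (C : E → ℝ) : {x : E // x ≠ e} → ℝ := fun x => C x.1

/-- `σ` is a signature for the collection `SC` of signed circuits (or cocircuits):
it consists of members of `SC` and, for each member of `SC`, contains exactly one of
the two opposite signed versions. -/
def SigOf {α : Type*} (SC : Set (α → ℝ)) (σ : Set (α → ℝ)) : Prop :=
  σ ⊆ SC ∧ ∀ C ∈ SC, Xor' (C ∈ σ) (-C ∈ σ)

/-- A signature is acyclic if no nonzero nonnegative linear combination of its
members vanishes. -/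
def AcyclicSig {α : Type*} (σ : Set (α → ℝ)) : Prop :=
  ∀ S : Finset (α → ℝ), ↑S ⊆ σ → ∀ lam : (α → ℝ) → ℝ,
    (∀ C ∈ S, 0 ≤ lam C) → ∑ C ∈ S, lam C • C = 0 → ∀ C ∈ S, lam C = 0

/-- The signed circuits of the contraction `M/e`: the support-minimal nonzero
restrictions of signed circuits of `M`. -/
def SCContr {m E : Type*} [Fintype E] (A : Matrix m E ℝ) (e : E) :
    Set ({x : E // x ≠ e} → ℝ) :=
  {D | (∃ C, SignedCircuit A C ∧ restr e C = D) ∧ D ≠ 0 ∧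
    ∀ D' : {x : E // x ≠ e} → ℝ, (∃ C', SignedCircuit A C' ∧ restr e C' = D') →
      D' ≠ 0 → supp D' ⊆ supp D → supp D' = supp D}

/-- The signed circuits of the deletion `M∖e`: restrictions of signed circuits of `M`
vanishing at `e`. -/
def SCDel {m E : Type*} [Fintype E] (A : Matrix m E ℝ) (e : E) :
    Set ({x : E // x ≠ e} → ℝ) :=
  {D | ∃ C, SignedCircuit A C ∧ C e = 0 ∧ restr e C = D}

/-- The signed cocircuits of the contraction `M/e`: restrictions of signed cocircuits
of `M` vanishing at `e`. -/
def SCstarContr {m E : Type*} [Fintype m] (A : Matrix m E ℝ) (e : E) :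
    Set ({x : E // x ≠ e} → ℝ) :=
  {D | ∃ C, SignedCocircuit A C ∧ C e = 0 ∧ restr e C = D}

/-- The signed cocircuits of the deletion `M∖e`: the support-minimal nonzero
restrictions of signed cocircuits of `M`. -/
def SCstarDel {m E : Type*} [Fintype m] (A : Matrix m E ℝ) (e : E) :
    Set ({x : E // x ≠ e} → ℝ) :=
  {D | (∃ C, SignedCocircuit A C ∧ restr e C = D) ∧ D ≠ 0 ∧
    ∀ D' : {x : E // x ≠ e} → ℝ, (∃ C', SignedCocircuit A C' ∧ restr e C' = D') →
      D' ≠ 0 → supp D' ⊆ supp D → supp D' = supp D}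

/-- Deletion/contraction of a signature: restrict the members and keep those that are
signed circuits (resp. cocircuits) of the minor, whose collection is `SC'`. -/
def minorSig {E : Type*} (e : E) (σ : Set (E → ℝ)) (SC' : Set ({x : E // x ≠ e} → ℝ)) :
    Set ({x : E // x ≠ e} → ℝ) :=
  {D | ∃ C ∈ σ, restr e C = D} ∩ SC'

/-- `B` indexes a basis of the column space of `A` (i.e. a basis of the regular
matroid realized by `A`). -/
def IsBasisSet {m E : Type*} (A : Matrix m E ℝ) (B : Set E) : Prop :=
  LinearIndependent ℝ (fun x : B => fun i => A i x.1) ∧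
    ∀ y : E, (fun i => A i y) ∈ Submodule.span ℝ (Set.range fun x : B => fun i => A i x.1)

/-- The fourientation associated to a basis `B` and a circuit signature `σ`:
elements of `B` are bi-oriented, and each `x ∉ B` is oriented by the sign given by
the member of `σ` supported on the fundamental circuit of `x` with respect to `B`. -/
noncomputable def Fb {α : Type*} (σ : Set (α → ℝ)) (B : Set α) (x : α) : Set ℝ :=
  if x ∈ B then ({-1, 1} : Set ℝ)
  else {c | ∃ C ∈ σ, x ∈ supp C ∧ supp C ⊆ B ∪ {x} ∧ c = C x}

/-- Compatibility of a simple 1-chain with a fourientation. -/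
def CompatF {α : Type*} (C : α → ℝ) (F : α → Set ℝ) : Prop :=
  ∀ x, C x ≠ 0 → C x ∈ F x

/-- Pointwise negation of a fourientation. -/
def negF {α : Type*} (F : α → Set ℝ) : α → Set ℝ := fun x => (fun s : ℝ => -s) '' F x

/-- A circuit signature `σ` (for circuit collection `SC` and basis collection
`Bases`) is triangulating if for distinct bases `B₁ ≠ B₂` the fourientation
`F(B₁,σ) ∩ -F(B₂,σ)` is compatible with no signed circuit. -/
def Triang {α : Type*} (SC : Set (α → ℝ)) (Bases : Set (Set α)) (σ : Set (α → ℝ)) :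
    Prop :=
  ∀ B₁ ∈ Bases, ∀ B₂ ∈ Bases, B₁ ≠ B₂ → ∀ C ∈ SC,
    ¬ CompatF C (fun x => Fb σ B₁ x ∩ negF (Fb σ B₂) x)

/-- A cocircuit signature `σ*` is triangulating if for distinct bases `B₁ ≠ B₂` the
fourientation `F(B₁,σ*) ∩ -F(B₂,σ*)` is compatible with no signed cocircuit; here
`F(B,σ*)` bi-orients the complement of `B`. -/
def TriangCo {α : Type*} (SCstar : Set (α → ℝ)) (Bases : Set (Set α))
    (σs : Set (α → ℝ)) : Prop :=
  ∀ B₁ ∈ Bases, ∀ B₂ ∈ Bases, B₁ ≠ B₂ → ∀ D ∈ SCstar,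
    ¬ CompatF D (fun x => Fb σs B₁ᶜ x ∩ negF (Fb σs B₂ᶜ) x)

/-- The set of signed fundamental circuits with respect to a basis `B`, within a
collection `SC` of signed circuits. -/
def SFCset {α : Type*} (SC : Set (α → ℝ)) (B : Set α) : Set (α → ℝ) :=
  {C | C ∈ SC ∧ ∃ f ∉ B, f ∈ supp C ∧ supp C ⊆ B ∪ {f}}

/-- A kernel vector supported on an independent set is zero. -/
lemma ker_supp_basis {m E : Type*} [Fintype E] (A : Matrix m E ℝ) (B : Set E)
    (hB : LinearIndependent ℝ (fun x : B => fun i => A i x.1))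
    (v : E → ℝ) (hv : A.mulVec v = 0) (hs : ∀ x, v x ≠ 0 → x ∈ B) : v = 0 := by
  classical
  haveI : Fintype B := Fintype.ofFinite B
  have key : ∑ x : B, v x.1 • (fun i => A i x.1) = 0 := by
    funext i
    have h0 : ∑ x : E, A i x * v x = 0 := by
      have := congrFun hv i
      simpa [Matrix.mulVec, dotProduct] using this
    have h1 : (∑ x : B, v x.1 • fun i => A i x.1) i
        = ∑ x : B, v x.1 * A i x.1 := by simp [Finset.sum_apply]
    have h2 : ∑ x : B, v x.1 * A i x.1 = ∑ x ∈ B.toFinset, v x * A i x := by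
      rw [← Finset.sum_set_coe]
    have h3 : ∑ x ∈ B.toFinset, v x * A i x = ∑ x : E, v x * A i x := by
      apply Finset.sum_subset (Finset.subset_univ _)
      intro x _ hx
      have hvx : v x = 0 := by
        by_contra h; exact hx (Set.mem_toFinset.mpr (hs x h))
      simp [hvx]
    have h4 : ∑ x : E, v x * A i x = 0 := by
      rw [← h0]; exact Finset.sum_congr rfl (fun x _ => mul_comm _ _)
    simp only [h1, h2, h3, h4, Pi.zero_apply]
  have hz := Fintype.linearIndependent_iff.mp hB (fun x => v x.1) key
  funext x
  by_cases hx : x ∈ B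
  · exact hz ⟨x, hx⟩
  · by_contra h; exact hx (hs x h)

/-- A kernel vector supported on a non-loop element is zero. -/
lemma ker_supp_single {m E : Type*} [Fintype E] (A : Matrix m E ℝ) (e : E)
    (hloop : (fun i => A i e) ≠ 0) (v : E → ℝ) (hv : A.mulVec v = 0)
    (hs : ∀ x, v x ≠ 0 → x = e) : v = 0 := by
  classical
  by_contra hvne
  have hve : v e ≠ 0 := by
    intro h0
    apply hvne; funext x
    by_cases h : v x = 0
    · exact h
    · rw [hs x h]; exact h0
  apply hloop
  funext i
  have h0 : ∑ x : E, A i x * v x = 0 := by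
    have := congrFun hv i
    simpa [Matrix.mulVec, dotProduct] using this
  have h1 : A i e * v e = 0 := by
    rw [← h0]
    symm
    apply Finset.sum_eq_single e
    · intro x _ hx
      have hvx : v x = 0 := by by_contra h; exact hx (hs x h)
      simp [hvx]
    · simp
  have := (mul_eq_zero.mp h1).resolve_right hve
  simpa using this

theorem fundamental_circuits_contraction_bijection
    {m E : Type*} [Fintype m] [Fintype E] [DecidableEq E] (A : Matrix m E ℝ)
    (hA : A.IsTotallyUnimodular) (e : E)
    (hloop : (fun i => A i e) ≠ 0)
    (hcoloop : ¬ ∃ w : E → ℝ, (∃ y, Matrix.vecMul y A = w) ∧ w ≠ 0 ∧ supp w = {e})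
    (B : Set E) (hB : IsBasisSet A B) (he : e ∈ B) :
    (∀ f, ∀ hf : f ∉ B, ∀ C : E → ℝ, SignedCircuit A C → f ∈ supp C →
      supp C ⊆ B ∪ {f} →
        restr e C ∈ SCContr A e ∧
        (⟨f, fun h => hf (h ▸ he)⟩ : {x : E // x ≠ e}) ∈ supp (restr e C) ∧
        supp (restr e C) ⊆
          {y : {x : E // x ≠ e} | y.1 ∈ B} ∪ {(⟨f, fun h => hf (h ▸ he)⟩ : {x : E // x ≠ e})}) ∧
    Set.BijOn (restr e) (SFCset {C | SignedCircuit A C} B)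
      (SFCset (SCContr A e) {y : {x : E // x ≠ e} | y.1 ∈ B}) := by
  classical
  obtain ⟨hBli, hBspan⟩ := hB
  -- uniqueness of the support of a circuit inside B ∪ {f}
  have huniq : ∀ f, f ∉ B → ∀ C C' : E → ℝ, A.mulVec C = 0 → A.mulVec C' = 0 →
      C f ≠ 0 → C' f ≠ 0 → supp C ⊆ B ∪ {f} → supp C' ⊆ B ∪ {f} →
      supp C = supp C' := by
    intro f hf C C' hC hC' hCf hC'f hsC hsC'
    have hD : C' f • C - C f • C' = 0 := by
      apply ker_supp_basis A B hBli
      · rw [Matrix.mulVec_sub, Matrix.mulVec_smul, Matrix.mulVec_smul, hC, hC']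
        simp
      · intro x hx
        by_cases hxf : x = f
        · subst hxf
          exfalso
          apply hx
          simp [mul_comm]
        · have hx' : C x ≠ 0 ∨ C' x ≠ 0 := by
            by_contra h
            push_neg at h
            apply hx
            simp [h.1, h.2]
          rcases hx' with h | h
          · rcases hsC h with hB' | hF
            · exact hB'
            · exact absurd hF hxf
          · rcases hsC' h with hB' | hF
            · exact hB'
            · exact absurd hF hxf
    have heq : ∀ x, C' f * C x = C f * C' x := by
      intro x
      have := congrFun hD x
      simp only [Pi.sub_apply, Pi.smul_apply, smul_eq_mul, Pi.zero_apply,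
        sub_eq_zero] at this
      exact this
    ext x
    constructor
    · intro hx
      simp only [supp, Set.mem_setOf_eq] at hx ⊢
      intro h0
      apply hx
      have := heq x
      rw [h0, mul_zero] at this
      exact (mul_eq_zero.mp this).resolve_left hC'f
    · intro hx
      simp only [supp, Set.mem_setOf_eq] at hx ⊢
      intro h0
      apply hx
      have := heq x
      rw [h0, mul_zero] at this
      exact (mul_eq_zero.mp this.symm).resolve_left hCf
  -- Part 1
  have part1 : ∀ f, ∀ hf : f ∉ B, ∀ C : E → ℝ, SignedCircuit A C → f ∈ supp C →
      supp C ⊆ B ∪ {f} →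
        restr e C ∈ SCContr A e ∧
        (⟨f, fun h => hf (h ▸ he)⟩ : {x : E // x ≠ e}) ∈ supp (restr e C) ∧
        supp (restr e C) ⊆
          {y : {x : E // x ≠ e} | y.1 ∈ B} ∪
            {(⟨f, fun h => hf (h ▸ he)⟩ : {x : E // x ≠ e})} := by
    intro f hf C hSC hfC hsC
    have hfe : f ≠ e := fun h => hf (h ▸ he)
    have hCf : C f ≠ 0 := hfC
    have hfmem : (⟨f, hfe⟩ : {x : E // x ≠ e}) ∈ supp (restr e C) := by
      simpa [supp, restr] using hCf
    have hne : restr e C ≠ 0 := by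
      intro h
      exact hCf (by simpa [restr] using congrFun h ⟨f, hfe⟩)
    refine ⟨⟨⟨C, hSC, rfl⟩, hne, ?_⟩, hfmem, ?_⟩
    · -- minimality
      rintro D' ⟨C', hC'sc, rfl⟩ hD'ne hsub
      have hsC' : supp C' ⊆ B ∪ {f} := by
        intro x hx
        by_cases hxe : x = e
        · exact Or.inl (hxe ▸ he)
        · have : (⟨x, hxe⟩ : {x : E // x ≠ e}) ∈ supp (restr e C') := by
            simpa [supp, restr] using hx
          have := hsub this
          have : C x ≠ 0 := this
          exact hsC this
      have hC'f : C' f ≠ 0 := by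
        intro h0
        apply hD'ne
        have hz : C' = 0 := by
          apply ker_supp_basis A B hBli C' hC'sc.1
          intro x hx
          rcases hsC' hx with hB' | hF
          · exact hB'
          · exact absurd (hF ▸ h0) hx
        funext y
        simp [restr, hz]
      have hsupp := huniq f hf C C' hSC.1 hC'sc.1 hCf hC'f hsC hsC'
      ext y
      simp only [supp, restr, Set.mem_setOf_eq]
      exact Set.ext_iff.mp hsupp.symm y.1
    · -- support containment
      intro y hy
      have : C y.1 ≠ 0 := hy
      rcases hsC this with hB' | hF
      · exact Or.inl hB'
      · right
        simp only [Set.mem_singleton_iff]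
        exact Subtype.ext hF
  refine ⟨part1, ?_, ?_, ?_⟩
  · -- MapsTo
    rintro C ⟨hSC, f, hf, hfC, hsC⟩
    obtain ⟨h1, h2, h3⟩ := part1 f hf C hSC hfC hsC
    exact ⟨h1, ⟨f, fun h => hf (h ▸ he)⟩, hf, h2, h3⟩
  · -- InjOn
    rintro C₁ ⟨hSC₁, _⟩ C₂ ⟨hSC₂, _⟩ heq
    have : C₁ - C₂ = 0 := by
      apply ker_supp_single A e hloop
      · rw [Matrix.mulVec_sub, hSC₁.1, hSC₂.1, sub_zero]
      · intro x hx
        by_contra hxe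
        apply hx
        have := congrFun heq ⟨x, hxe⟩
        simpa [restr, sub_eq_zero] using this
    exact sub_eq_zero.mp this
  · -- SurjOn
    rintro D ⟨⟨⟨C, hCsc, hrC⟩, hDne, hmin⟩, g, hgB, hgD, hsD⟩
    refine ⟨C, ⟨hCsc, g.1, hgB, ?_, ?_⟩, hrC⟩
    · have : D g ≠ 0 := hgD
      rw [← hrC] at this
      exact this
    · intro x hx
      by_cases hxe : x = e
      · exact Or.inl (hxe ▸ he)
      · have hmem : (⟨x, hxe⟩ : {x : E // x ≠ e}) ∈ supp D := by
          rw [← hrC]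
          simpa [supp, restr] using hx
        rcases hsD hmem with hB' | hF
        · exact Or.inl hB'
        · right
          simp only [Set.mem_singleton_iff] at hF ⊢
          exact congrArg Subtype.val hF
end
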